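/- Let m be a finite measure, and for each n let (C_i^{(n)})_{i ∈ I_n} be a finite collection of pairwise disjoint measurable sets with Σ_i m(C_i^{(n)}) ≤ M and sup_i m(C_i^{(n)}) ≤ 2^{−n}. Let (ΔX_C) assign to each C an independent Gaussian random variable with mean γ·m(C) and variance σ²·m(C). Then for every ε > 0, Σ_n P(sup_{i ∈ I_n} |ΔX_{C_i^{(n)}}| > ε) < ∞, and hence almost surely sup_{i ∈ I_n} |ΔX_{C_i^{(n)}}| → 0 as n → ∞. -/

import Mathlib

/-! Markov's inequality for the fourth moment bounds `P(|ΔX_C| > ε)` by a constant times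
`(σ⁴ m(C)² + γ⁴ m(C)⁴) / ε⁴`, and since `m(C) ≤ 2⁻ⁿ ≤ 1` both terms are at most `2⁻ⁿ m(C)`.
A union bound over the `n`-th collection then gives `P(supᵢ |ΔX_{Cᵢ}| > ε) = O(2⁻ⁿ M)`,
which is summable, and the first Borel–Cantelli lemma yields the almost sure convergence. -/

open MeasureTheory ProbabilityTheory Filter Set
open scoped NNReal ENNReal

-- Its value is `3`, which the argument never needs.
noncomputable def stdGaussianFourthMoment : ℝ := ∫ x, x ^ 4 ∂gaussianReal 0 1

lemma stdGaussianFourthMoment_nonneg : 0 ≤ stdGaussianFourthMoment :=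
  integral_nonneg fun x => by positivity

lemma integrable_sub_pow_gaussianReal (μ c : ℝ) (v : ℝ≥0) (p : ℕ) :
    Integrable (fun x => (x - c) ^ p) (gaussianReal μ v) := by
  rcases eq_or_ne p 0 with rfl | hp
  · simp
  · refine (((memLp_id_gaussianReal p).sub (memLp_const c)).integrable_norm_pow hp).mono'
      (by fun_prop) (ae_of_all _ fun x => ?_)
    simp

lemma integral_sub_pow_four_gaussianReal (μ : ℝ) (v : ℝ≥0) :
    ∫ x, (x - μ) ^ 4 ∂gaussianReal μ v = (v : ℝ) ^ 2 * stdGaussianFourthMoment := by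
  have h_center : (gaussianReal μ v).map (· - μ) = gaussianReal 0 v := by
    simpa using gaussianReal_map_sub_const (μ := μ) (v := v) μ
  have h_scale : (gaussianReal 0 1).map (√(v : ℝ) * ·) = gaussianReal 0 v := by
    rw [gaussianReal_map_const_mul]
    congr
    · simp
    · ext; simp
  calc ∫ x, (x - μ) ^ 4 ∂gaussianReal μ v = ∫ x, x ^ 4 ∂gaussianReal 0 v := by
        rw [← h_center, integral_map (by fun_prop) (by fun_prop)]
    _ = ∫ x, (√(v : ℝ) * x) ^ 4 ∂gaussianReal 0 1 := by
        rw [← h_scale, integral_map (by fun_prop) (by fun_prop)]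
    _ = (v : ℝ) ^ 2 * stdGaussianFourthMoment := by
        rw [stdGaussianFourthMoment, ← integral_const_mul]
        congr with x
        rw [mul_pow, show 4 = 2 * 2 from rfl, pow_mul, Real.sq_sqrt v.coe_nonneg]

lemma pow_four_le_eight_mul (a b : ℝ) : a ^ 4 ≤ 8 * ((a - b) ^ 4 + b ^ 4) := by
  nlinarith [sq_nonneg ((a - b) ^ 2 - b ^ 2), sq_nonneg (a - 2 * b), sq_nonneg a]

lemma integral_pow_four_gaussianReal_le (μ : ℝ) (v : ℝ≥0) :
    ∫ x, x ^ 4 ∂gaussianReal μ v ≤ 8 * ((v : ℝ) ^ 2 * stdGaussianFourthMoment + μ ^ 4) := by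
  calc ∫ x, x ^ 4 ∂gaussianReal μ v ≤ ∫ x, 8 * ((x - μ) ^ 4 + μ ^ 4) ∂gaussianReal μ v :=
        integral_mono (by simpa using integrable_sub_pow_gaussianReal μ 0 v 4)
          ((integrable_sub_pow_gaussianReal μ μ v 4).add
            (integrable_const _) |>.const_mul 8) fun x => pow_four_le_eight_mul x μ
    _ = 8 * ((v : ℝ) ^ 2 * stdGaussianFourthMoment + μ ^ 4) := by
        rw [integral_const_mul, integral_add _ (integrable_const _), integral_const,
          integral_sub_pow_four_gaussianReal]
        · simp
        · exact integrable_sub_pow_gaussianReal μ μ v 4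

lemma gaussianReal_real_lt_abs_le (μ : ℝ) (v : ℝ≥0) {ε : ℝ} (hε : 0 < ε) :
    (gaussianReal μ v).real {x | ε < |x|}
      ≤ 8 * ((v : ℝ) ^ 2 * stdGaussianFourthMoment + μ ^ 4) / ε ^ 4 := by
  have h_markov := mul_meas_ge_le_integral_of_nonneg (f := fun x => x ^ 4)
    (ae_of_all _ fun x => by positivity)
    (by simpa using integrable_sub_pow_gaussianReal μ 0 v 4) (ε ^ 4)
  rw [le_div_iff₀ (by positivity), mul_comm]
  refine le_trans ?_ (h_markov.trans (integral_pow_four_gaussianReal_le μ v))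
  gcongr
  · finiteness
  · intro hx
    simpa [(by decide : Even 4).pow_abs] using pow_le_pow_left₀ hε.le hx.le 4

lemma gaussianReal_mul_real_lt_abs_le (γ σ : ℝ) {s t ε : ℝ} (hs : 0 ≤ s) (hst : s ≤ t)
    (hs1 : s ≤ 1) (hε : 0 < ε) :
    (gaussianReal (γ * s) (σ ^ 2 * s).toNNReal).real {x | ε < |x|}
      ≤ 8 * (σ ^ 4 * stdGaussianFourthMoment + γ ^ 4) / ε ^ 4 * t * s := by
  have hs2 : s ^ 2 ≤ t * s := by nlinarith
  have hs4 : s ^ 4 ≤ t * s := (pow_le_pow_of_le_one hs hs1 (by norm_num)).trans hs2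
  have hc := stdGaussianFourthMoment_nonneg
  refine (gaussianReal_real_lt_abs_le _ _ hε).trans ?_
  rw [Real.coe_toNNReal _ (by positivity), div_mul_eq_mul_div, div_mul_eq_mul_div, mul_assoc,
    mul_assoc, ← mul_assoc _ t]
  gcongr 8 * ?_ / _
  calc (σ ^ 2 * s) ^ 2 * stdGaussianFourthMoment + (γ * s) ^ 4
      = σ ^ 4 * stdGaussianFourthMoment * s ^ 2 + γ ^ 4 * s ^ 4 := by ring
    _ ≤ σ ^ 4 * stdGaussianFourthMoment * (t * s) + γ ^ 4 * (t * s) := by gcongr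
    _ = (σ ^ 4 * stdGaussianFourthMoment + γ ^ 4) * t * s := by ring

lemma measureReal_exists_lt_abs_le {Ω ι : Type*} [MeasurableSpace Ω] [Fintype ι]
    {P : Measure Ω} (γ σ : ℝ) {t ε : ℝ} (X : ι → Ω → ℝ) (s : ι → ℝ)
    (hX : ∀ i, Measurable (X i))
    (hlaw : ∀ i, P.map (X i) = gaussianReal (γ * s i) (σ ^ 2 * s i).toNNReal)
    (hs : ∀ i, 0 ≤ s i) (hst : ∀ i, s i ≤ t) (ht : t ≤ 1) (hε : 0 < ε) :
    P.real {ω | ∃ i, ε < |X i ω|}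
      ≤ 8 * (σ ^ 4 * stdGaussianFourthMoment + γ ^ 4) / ε ^ 4 * t * ∑ i, s i := by
  have h_union : {ω | ∃ i, ε < |X i ω|} = ⋃ i, X i ⁻¹' {x | ε < |x|} := by
    ext; simp
  rw [h_union, Finset.mul_sum]
  refine (measureReal_iUnion_fintype_le _).trans (Finset.sum_le_sum fun i _ => ?_)
  rw [← map_measureReal_apply (hX i) (measurableSet_lt measurable_const measurable_abs), hlaw]
  exact gaussianReal_mul_real_lt_abs_le γ σ (hs i) (hst i) ((hst i).trans ht) hε

lemma ae_tendsto_iSup_abs_zero_of_summable {Ω : Type*} [MeasurableSpace Ω] {P : Measure Ω}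
    [IsFiniteMeasure P] {ι : ℕ → Type*} (Y : (n : ℕ) → ι n → Ω → ℝ)
    (hY : ∀ ε > 0, Summable fun n => P.real {ω | ∃ i, ε < |Y n i ω|}) :
    ∀ᵐ ω ∂P, Tendsto (fun n => ⨆ i, |Y n i ω|) atTop (nhds 0) := by
  have h_eventually : ∀ᵐ ω ∂P, ∀ J : ℕ, ∀ᶠ n in atTop, ∀ i, |Y n i ω| ≤ 1 / (J + 1) := by
    rw [ae_all_iff]
    intro J
    have h_tsum : ∑' n, P {ω | ∃ i, 1 / ((J : ℝ) + 1) < |Y n i ω|} ≠ ∞ := by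
      rw [tsum_congr fun n => (ofReal_measureReal (μ := P)).symm,
        ← ENNReal.ofReal_tsum_of_nonneg (fun _ => measureReal_nonneg) (hY _ (by positivity))]
      exact ENNReal.ofReal_ne_top
    filter_upwards [ae_eventually_notMem h_tsum] with ω hω
    filter_upwards [hω] with n hn i
    simp only [not_exists, not_lt] at hn
    exact hn i
  filter_upwards [h_eventually] with ω hω
  rw [Metric.tendsto_atTop]
  intro δ hδ
  obtain ⟨J, hJ⟩ := exists_nat_one_div_lt hδ
  obtain ⟨N, hN⟩ := eventually_atTop.mp (hω J)
  refine ⟨N, fun n hn => ?_⟩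
  rw [Real.dist_0_eq_abs, abs_of_nonneg (Real.iSup_nonneg fun i => abs_nonneg _)]
  exact (Real.iSup_le (hN n hn) (by positivity)).trans_lt hJ

theorem gaussian_increments_sup_tendsto_zero_general
    {α Ω : Type*} [MeasurableSpace α] [MeasurableSpace Ω]
    (P : Measure Ω) [IsProbabilityMeasure P]
    (m : Measure α)
    (γ σ M : ℝ)
    (k : ℕ → ℕ) (C : (n : ℕ) → Fin (k n) → Set α)
    (hCmeas : ∀ n i, MeasurableSet (C n i))
    (htotal : ∀ n, ∑ i : Fin (k n), (m (C n i)).toReal ≤ M)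
    (hmesh : ∀ n, ∀ i : Fin (k n), (m (C n i)).toReal ≤ 2 ^ (-(n : ℝ)))
    (ΔX : Set α → Ω → ℝ)
    (hmeasΔ : ∀ s : Set α, MeasurableSet s → Measurable (ΔX s))
    (hgauss : ∀ n, ∀ i : Fin (k n),
      Measure.map (ΔX (C n i)) P
        = gaussianReal (γ * (m (C n i)).toReal)
            (σ ^ 2 * (m (C n i)).toReal).toNNReal) :
    ∀ ε : ℝ, 0 < ε →
      Summable (fun n => (P {ω | ∃ i : Fin (k n), ε < |ΔX (C n i) ω|}).toReal) ∧
      ∀ᵐ ω ∂P,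
        Tendsto (fun n => ⨆ i : Fin (k n), |ΔX (C n i) ω|) atTop (nhds 0) := by
  have h_summable : ∀ ε > 0,
      Summable fun n => P.real {ω | ∃ i : Fin (k n), ε < |ΔX (C n i) ω|} := by
    intro ε hε
    set K := 8 * (σ ^ 4 * stdGaussianFourthMoment + γ ^ 4) / ε ^ 4
    have hK : 0 ≤ K := by have := stdGaussianFourthMoment_nonneg; positivity
    have h_mesh : ∀ n : ℕ, (2 : ℝ) ^ (-(n : ℝ)) = (1 / 2) ^ n := fun n => by
      rw [Real.rpow_neg zero_le_two, Real.rpow_natCast, one_div, inv_pow]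
    have h_mesh_le_one : ∀ n : ℕ, (2 : ℝ) ^ (-(n : ℝ)) ≤ 1 := fun n => by
      rw [h_mesh]; exact pow_le_one₀ (by norm_num) (by norm_num)
    refine .of_nonneg_of_le (fun _ => measureReal_nonneg) (fun n => ?_)
      (summable_geometric_two.mul_left (K * M))
    calc P.real {ω | ∃ i : Fin (k n), ε < |ΔX (C n i) ω|}
        ≤ K * 2 ^ (-(n : ℝ)) * ∑ i : Fin (k n), (m (C n i)).toReal :=
          measureReal_exists_lt_abs_le γ σ _ _ (fun i => hmeasΔ _ (hCmeas n i)) (hgauss n)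
            (fun _ => ENNReal.toReal_nonneg) (hmesh n) (h_mesh_le_one n) hε
      _ ≤ K * 2 ^ (-(n : ℝ)) * M := by gcongr; exact htotal n
      _ = K * M * (1 / 2) ^ n := by rw [h_mesh]; ring
  intro ε hε
  exact ⟨h_summable ε hε,
    ae_tendsto_iSup_abs_zero_of_summable (fun n i => ΔX (C n i)) h_summable⟩

/-- Borel–Cantelli argument of Theorem 7.4: for collections of
pairwise disjoint sets with total measure ≤ M and mesh ≤ 2^{-n}, and
independent Gaussian increments with mean `γ m(C)` and variance `σ² m(C)`,
the tail probabilities of the sups are summable and the sups tend to 0 a.s. -/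
theorem gaussian_increments_sup_tendsto_zero
    {α Ω : Type*} [MeasurableSpace α] [MeasurableSpace Ω]
    (P : Measure Ω) [IsProbabilityMeasure P]
    (m : Measure α) [IsFiniteMeasure m]
    (γ σ M : ℝ) (hM : 0 ≤ M)
    (k : ℕ → ℕ) (C : (n : ℕ) → Fin (k n) → Set α)
    (hCmeas : ∀ n i, MeasurableSet (C n i))
    (hdisj : ∀ n, Pairwise fun i j : Fin (k n) => Disjoint (C n i) (C n j))
    (htotal : ∀ n, ∑ i : Fin (k n), (m (C n i)).toReal ≤ M)
    (hmesh : ∀ n, ∀ i : Fin (k n), (m (C n i)).toReal ≤ 2 ^ (-(n : ℝ)))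
    (ΔX : Set α → Ω → ℝ)
    (hmeasΔ : ∀ s : Set α, MeasurableSet s → Measurable (ΔX s))
    (hgauss : ∀ n, ∀ i : Fin (k n),
      Measure.map (ΔX (C n i)) P
        = gaussianReal (γ * (m (C n i)).toReal)
            (σ ^ 2 * (m (C n i)).toReal).toNNReal)
    (hindep : iIndepFun
      (fun p : Σ n : ℕ, Fin (k n) => ΔX (C p.1 p.2)) P) :
    ∀ ε : ℝ, 0 < ε →
      Summable (fun n => (P {ω | ∃ i : Fin (k n), ε < |ΔX (C n i) ω|}).toReal) ∧
      ∀ᵐ ω ∂P,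
        Tendsto (fun n => ⨆ i : Fin (k n), |ΔX (C n i) ω|) atTop (nhds 0) :=
  gaussian_increments_sup_tendsto_zero_general P m γ σ M k C hCmeas htotal hmesh ΔX hmeasΔ hgauss
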